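/- arXiv:1205.5085 — 3 statements merged into one kernel-verified Lean document; each statement's English description precedes it below -/
import Mathlib

section
/- Define P̃₀(x) := 1, P̃₁(x) := x/√3, and for n ≥ 2, P̃_n(x) := (√(4n-2)/(n-1))·Σ_{j=0}^{n} C(n-1, n-j)·C(n-1, j)·((x-1)/2)^j·((x+1)/2)^{n-j}. Then the sequence {P̃_n}_{n=0}^{∞} is orthonormal with respect to the Sobolev inner product φ(f,g) := ½f(-1)ḡ(-1) + ½f(1)ḡ(1) + ∫_{-1}^{1} f'(x)ḡ'(x)dx; that is, φ(P̃_m, P̃_n) = δ_{mn} for all m, n ≥ 0. -/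
/-!
For `n ≥ 2`, Leibniz's rule identifies `P̃ₙ` with a multiple of `D^{n-2} (x² - 1)^{n-1}`. Hence
`P̃ₙ` vanishes at `±1`, and `P̃ₙ'` is a multiple of the Rodrigues polynomial
`D^{n-1} (x² - 1)^{n-1}`, i.e. of the Legendre polynomial of degree `n - 1`. So as soon as one
index is at least `2` the boundary terms of `φ` drop out and `φ` becomes the `L²(-1, 1)` inner
product of Legendre polynomials. Repeated integration by parts against `(x² - 1)^k` gives their
orthogonality, and their norms through `∫₋₁¹ (1 - x²)^k = 2^{2k+1} k!² / (2k+1)!`. The cases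
`m, n ≤ 1` are direct computations.
-/

open MeasureTheory Set

/-- The renormalized Jacobi polynomials with parameters `α = β = -1`:
`P̃₀(x) = 1`, `P̃₁(x) = x/√3`, and for `n ≥ 2`
`P̃_n(x) = (√(4n-2)/(n-1)) Σ_{j=0}^{n} C(n-1, n-j) C(n-1, j) ((x-1)/2)^j ((x+1)/2)^{n-j}`. -/
noncomputable def Ptilde : ℕ → ℝ → ℝ
  | 0 => fun _ => 1
  | 1 => fun x => x / Real.sqrt 3
  | (n + 2) => fun x =>
      (Real.sqrt (4 * ((n : ℝ) + 2) - 2) / ((n : ℝ) + 1)) *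
        ∑ j ∈ Finset.range (n + 3),
          ((n + 1).choose (n + 2 - j) : ℝ) * ((n + 1).choose j : ℝ) *
            ((x - 1) / 2) ^ j * ((x + 1) / 2) ^ (n + 2 - j)

/-- The Sobolev inner product
`φ(f,g) = ½ f(-1)g(-1) + ½ f(1)g(1) + ∫_{-1}^{1} f'(x)g'(x) dx`. -/
noncomputable def sobolevIP (f g : ℝ → ℝ) : ℝ :=
  (1 / 2) * f (-1) * g (-1) + (1 / 2) * f 1 * g 1 +
    ∫ x in Ioo (-1 : ℝ) 1, deriv f x * deriv g x

open Polynomial Nat Finset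

theorem eval_iterate_derivative_eq_zero_of_pow_dvd {R : Type*} [CommRing R] {p : R[X]} {t : R}
    {i k : ℕ} (hi : i < k) (h : (X - C t) ^ k ∣ p) : (derivative^[i] p).eval t = 0 :=
  dvd_iff_isRoot.mp <| (dvd_pow_self _ (Nat.sub_ne_zero_of_lt hi)).trans
    (pow_sub_dvd_iterate_derivative_of_pow_dvd _ h)

theorem Polynomial.Monic.iterate_derivative_natDegree {R : Type*} [CommSemiring R] {p : R[X]}
    (hp : p.Monic) : derivative^[p.natDegree] p = C (p.natDegree ! : R) := by
  have h0 : (derivative^[p.natDegree] p).natDegree ≤ 0 :=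
    (natDegree_iterate_derivative p _).trans (Nat.sub_self _).le
  rw [eq_C_of_natDegree_le_zero h0, coeff_iterate_derivative, zero_add, hp.coeff_natDegree,
    Nat.descFactorial_self, nsmul_one]

theorem monic_X_sq_sub_one {R : Type*} [CommRing R] : (X ^ 2 - 1 : R[X]).Monic := by
  simpa using monic_X_pow_sub_C (1 : R) two_ne_zero

theorem natDegree_X_sq_sub_one_pow {R : Type*} [CommRing R] [Nontrivial R] (k : ℕ) :
    ((X ^ 2 - 1 : R[X]) ^ k).natDegree = 2 * k := by
  rw [monic_X_sq_sub_one.natDegree_pow, ← C_1, natDegree_X_pow_sub_C, mul_comm]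

theorem eval_iterate_derivative_X_sq_sub_one_pow {R : Type*} [CommRing R] {t : R}
    (ht : t ^ 2 = 1) {i k : ℕ} (hi : i < k) :
    (derivative^[i] ((X ^ 2 - 1 : R[X]) ^ k)).eval t = 0 := by
  refine eval_iterate_derivative_eq_zero_of_pow_dvd hi (pow_dvd_pow_of_dvd ⟨X + C t, ?_⟩ k)
  rw [← C_1, ← ht, C_pow]
  ring

theorem choose_mul_descFactorial_mul_descFactorial {i k : ℕ} (h : i ≤ k) :
    k.choose i * ((k + 1).descFactorial (k - i) * (k + 1).descFactorial i) =
      k ! * (k + 1).choose (k + 1 - i) * (k + 1).choose (i + 1) := by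
  rw [descFactorial_eq_factorial_mul_choose, descFactorial_eq_factorial_mul_choose,
    choose_symm_of_eq_add (show k + 1 = (k - i) + (i + 1) by omega),
    choose_symm (show i ≤ k + 1 by omega), ← choose_mul_factorial_mul_factorial h]
  ring

theorem iterate_derivative_X_sq_sub_one_pow_succ {R : Type*} [CommRing R] (k : ℕ) :
    derivative^[k] ((X ^ 2 - 1 : R[X]) ^ (k + 1)) =
      ∑ j ∈ range (k + 3), (k ! * (k + 1).choose (k + 2 - j) * (k + 1).choose j) •
        ((X - 1) ^ j * (X + 1) ^ (k + 2 - j)) := by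
  have hsplit : (X ^ 2 - 1 : R[X]) ^ (k + 1) = (X - C 1) ^ (k + 1) * (X + C 1) ^ (k + 1) := by
    rw [← mul_pow, C_1]; ring
  rw [hsplit, iterate_derivative_mul]
  conv_rhs => rw [sum_range_succ', sum_range_succ]
  simp only [choose_succ_self, Nat.sub_zero, mul_zero, zero_mul, zero_smul, add_zero]
  refine sum_congr rfl fun i hi => ?_
  have hik : i ≤ k := Nat.lt_succ_iff.mp (mem_range.mp hi)
  rw [iterate_derivative_X_sub_pow, iterate_derivative_X_add_pow, smul_mul_smul_comm, smul_smul,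
    choose_mul_descFactorial_mul_descFactorial hik, C_1,
    show k + 1 - (k - i) = i + 1 by omega, show k + 2 - (i + 1) = k + 1 - i by omega]

theorem integral_eval_mul_eval_derivative (p q : ℝ[X]) (a b : ℝ) :
    ∫ x in a..b, p.eval x * (derivative q).eval x =
      p.eval b * q.eval b - p.eval a * q.eval a -
        ∫ x in a..b, (derivative p).eval x * q.eval x :=
  intervalIntegral.integral_mul_deriv_eq_deriv_mul (fun x _ => p.hasDerivAt x)
    (fun x _ => q.hasDerivAt x) ((derivative p).continuous.intervalIntegrable _ _)
    ((derivative q).continuous.intervalIntegrable _ _)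

theorem integral_eval_mul_eval_iterate_derivative (p q : ℝ[X]) {a b : ℝ} (j : ℕ)
    (hq : ∀ i < j, (derivative^[i] q).eval a = 0 ∧ (derivative^[i] q).eval b = 0) :
    ∫ x in a..b, p.eval x * (derivative^[j] q).eval x =
      (-1) ^ j * ∫ x in a..b, (derivative^[j] p).eval x * q.eval x := by
  induction j generalizing q with
  | zero => simp
  | succ j ih =>
    have hq' : ∀ i < j, (derivative^[i] (derivative q)).eval a = 0 ∧
        (derivative^[i] (derivative q)).eval b = 0 :=
      fun i hi => hq (i + 1) (by omega)
    obtain ⟨ha, hb⟩ := hq 0 j.succ_pos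
    rw [Function.iterate_succ_apply, ih _ hq', integral_eval_mul_eval_derivative,
      Function.iterate_succ_apply' derivative j p]
    simp only [Function.iterate_zero_apply] at ha hb
    rw [ha, hb]
    ring

theorem integral_one_sub_sq_pow_succ (k : ℕ) :
    (2 * k + 3 : ℝ) * ∫ x in (-1 : ℝ)..1, (1 - x ^ 2) ^ (k + 1) =
      (2 * k + 2 : ℝ) * ∫ x in (-1 : ℝ)..1, (1 - x ^ 2) ^ k := by
  have hderiv : ∀ x : ℝ, HasDerivAt (fun x => x * (1 - x ^ 2) ^ (k + 1))
      ((2 * k + 3) * (1 - x ^ 2) ^ (k + 1) - (2 * k + 2) * (1 - x ^ 2) ^ k) x := by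
    intro x
    refine ((hasDerivAt_id' x).fun_mul
      (((hasDerivAt_pow 2 x).const_sub 1).fun_pow (k + 1))).congr_deriv ?_
    push_cast
    ring
  have hint : ∀ j : ℕ, IntervalIntegrable (fun x : ℝ => (1 - x ^ 2) ^ j) volume (-1) 1 :=
    fun j => (by fun_prop : Continuous fun x : ℝ => (1 - x ^ 2) ^ j).intervalIntegrable _ _
  have hftc := intervalIntegral.integral_eq_sub_of_hasDerivAt (fun x _ => hderiv x)
    (((hint _).const_mul _).sub ((hint _).const_mul _))
  rw [intervalIntegral.integral_sub ((hint _).const_mul _) ((hint _).const_mul _),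
    intervalIntegral.integral_const_mul, intervalIntegral.integral_const_mul] at hftc
  norm_num at hftc
  linarith

theorem integral_one_sub_sq_pow (k : ℕ) :
    ∫ x in (-1 : ℝ)..1, (1 - x ^ 2) ^ k = 2 ^ (2 * k + 1) * (k ! : ℝ) ^ 2 / (2 * k + 1)! := by
  induction k with
  | zero => norm_num
  | succ k ih =>
    have hrec := integral_one_sub_sq_pow_succ k
    rw [ih] at hrec
    rw [eq_div_iff (by positivity)]
    have h1 : ((2 * (k + 1) + 1)! : ℝ) = (2 * k + 3) * (2 * k + 2) * (2 * k + 1)! := by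
      rw [show 2 * (k + 1) + 1 = 2 * k + 1 + 1 + 1 by ring, Nat.factorial_succ, Nat.factorial_succ]
      push_cast
      ring
    rw [h1, Nat.factorial_succ k]
    field_simp at hrec
    push_cast
    linear_combination (2 * (k : ℝ) + 2) * hrec

noncomputable def rodrigues (k : ℕ) : ℝ[X] := derivative^[k] ((X ^ 2 - 1) ^ k)

theorem integral_eval_mul_eval_rodrigues (p : ℝ[X]) (k : ℕ) :
    ∫ x in (-1)..1, p.eval x * (rodrigues k).eval x =
      (-1) ^ k * ∫ x in (-1)..1, (derivative^[k] p).eval x * ((X ^ 2 - 1) ^ k : ℝ[X]).eval x :=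
  integral_eval_mul_eval_iterate_derivative p _ k fun _ hi =>
    ⟨eval_iterate_derivative_X_sq_sub_one_pow (by norm_num) hi,
      eval_iterate_derivative_X_sq_sub_one_pow (by norm_num) hi⟩

theorem integral_eval_mul_eval_rodrigues_of_natDegree_lt {p : ℝ[X]} {k : ℕ}
    (hp : p.natDegree < k) : ∫ x in (-1)..1, p.eval x * (rodrigues k).eval x = 0 := by
  simp [integral_eval_mul_eval_rodrigues, iterate_derivative_eq_zero hp]

theorem iterate_derivative_rodrigues (k : ℕ) :
    derivative^[k] (rodrigues k) = C ((2 * k) ! : ℝ) := by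
  rw [rodrigues, ← Function.iterate_add_apply, ← two_mul, ← natDegree_X_sq_sub_one_pow (R := ℝ) k,
    Monic.iterate_derivative_natDegree (monic_X_sq_sub_one.pow k)]

theorem integral_eval_rodrigues_mul_self (k : ℕ) :
    ∫ x in (-1)..1, (rodrigues k).eval x * (rodrigues k).eval x =
      2 ^ (2 * k + 1) * (k ! : ℝ) ^ 2 / (2 * k + 1) := by
  calc ∫ x in (-1)..1, (rodrigues k).eval x * (rodrigues k).eval x
      = ((2 * k) ! : ℝ) * ∫ x in (-1 : ℝ)..1, (1 - x ^ 2) ^ k := by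
        rw [integral_eval_mul_eval_rodrigues, iterate_derivative_rodrigues,
          ← intervalIntegral.integral_const_mul, ← intervalIntegral.integral_const_mul]
        refine intervalIntegral.integral_congr fun x _ => ?_
        simp only [eval_C, eval_pow, eval_sub, eval_X, eval_one]
        rw [show 1 - x ^ 2 = -1 * (x ^ 2 - 1) by ring, mul_pow]
        ring
    _ = 2 ^ (2 * k + 1) * (k ! : ℝ) ^ 2 / (2 * k + 1) := by
        rw [integral_one_sub_sq_pow, Nat.factorial_succ]
        push_cast
        field_simp

theorem sobolevIP_comm (f g : ℝ → ℝ) : sobolevIP f g = sobolevIP g f := by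
  simp only [sobolevIP, mul_comm (deriv f _)]
  ring

theorem sobolevIP_eval (p q : ℝ[X]) :
    sobolevIP (fun x => p.eval x) (fun x => q.eval x) =
      1 / 2 * p.eval (-1) * q.eval (-1) + 1 / 2 * p.eval 1 * q.eval 1 +
        ∫ x in (-1)..1, (derivative p).eval x * (derivative q).eval x := by
  rw [sobolevIP, intervalIntegral.integral_of_le (by norm_num), integral_Ioc_eq_integral_Ioo]
  simp only [Polynomial.deriv]

noncomputable def jacobiScale (k : ℕ) : ℝ :=
  √(4 * ((k : ℝ) + 2) - 2) / ((k + 1) * 2 ^ (k + 2) * k !)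

noncomputable def jacobiPoly : ℕ → ℝ[X]
  | 0 => 1
  | 1 => C (√3)⁻¹ * X
  | k + 2 => C (jacobiScale k) * derivative^[k] ((X ^ 2 - 1) ^ (k + 1))

theorem Ptilde_eq_eval (n : ℕ) : Ptilde n = fun x => (jacobiPoly n).eval x := by
  funext x
  match n with
  | 0 => simp [Ptilde, jacobiPoly]
  | 1 => simp [Ptilde, jacobiPoly, div_eq_inv_mul]
  | k + 2 =>
    simp only [Ptilde, jacobiPoly, eval_mul, eval_C, iterate_derivative_X_sq_sub_one_pow_succ,
      eval_finsetSum, eval_natCast, eval_pow, eval_sub, eval_add, eval_X, eval_one, nsmul_eq_mul,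
      mul_sum]
    refine sum_congr rfl fun j hj => ?_
    have h2 : (2 : ℝ) ^ j * 2 ^ (k + 2 - j) = 2 ^ (k + 2) := by
      rw [← pow_add, Nat.add_sub_cancel' (Nat.lt_succ_iff.mp (mem_range.mp hj))]
    rw [jacobiScale, div_pow, div_pow, ← h2]
    push_cast
    field_simp

theorem eval_jacobiPoly_add_two {t : ℝ} (ht : t ^ 2 = 1) (k : ℕ) :
    (jacobiPoly (k + 2)).eval t = 0 := by
  rw [jacobiPoly, eval_mul, eval_iterate_derivative_X_sq_sub_one_pow ht (lt_add_one k), mul_zero]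

theorem derivative_jacobiPoly_add_two (k : ℕ) :
    derivative (jacobiPoly (k + 2)) = C (jacobiScale k) * rodrigues (k + 1) := by
  rw [jacobiPoly, derivative_C_mul, rodrigues, Function.iterate_succ_apply']

theorem natDegree_jacobiPoly_le (n : ℕ) : (jacobiPoly n).natDegree ≤ n := by
  match n with
  | 0 => simp [jacobiPoly]
  | 1 => exact (natDegree_C_mul_le _ _).trans natDegree_X_le
  | k + 2 =>
    refine (natDegree_C_mul_le _ _).trans ((natDegree_iterate_derivative _ _).trans ?_)
    rw [natDegree_X_sq_sub_one_pow]
    omega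

theorem sobolevIP_Ptilde_of_lt {m k : ℕ} (h : m < k + 2) :
    sobolevIP (Ptilde m) (Ptilde (k + 2)) = 0 := by
  have hdeg : (derivative (jacobiPoly m)).natDegree < k + 1 :=
    (natDegree_derivative_le _).trans_lt (by have := natDegree_jacobiPoly_le m; omega)
  rw [Ptilde_eq_eval, Ptilde_eq_eval, sobolevIP_eval, eval_jacobiPoly_add_two (by norm_num),
    eval_jacobiPoly_add_two (by norm_num), derivative_jacobiPoly_add_two]
  simp only [eval_mul, eval_C, mul_left_comm _ (jacobiScale k), intervalIntegral.integral_const_mul,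
    integral_eval_mul_eval_rodrigues_of_natDegree_lt hdeg]
  ring

theorem sobolevIP_Ptilde_add_two_self (k : ℕ) :
    sobolevIP (Ptilde (k + 2)) (Ptilde (k + 2)) = 1 := by
  rw [Ptilde_eq_eval, sobolevIP_eval, eval_jacobiPoly_add_two (by norm_num),
    eval_jacobiPoly_add_two (by norm_num), derivative_jacobiPoly_add_two]
  simp only [eval_mul, eval_C, mul_mul_mul_comm, intervalIntegral.integral_const_mul,
    integral_eval_rodrigues_mul_self]
  have hsqrt : √(4 * ((k : ℝ) + 2) - 2) ^ 2 = 4 * ((k : ℝ) + 2) - 2 :=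
    Real.sq_sqrt (by linarith [(Nat.cast_nonneg k : (0 : ℝ) ≤ k)])
  rw [← sq, jacobiScale, div_pow, hsqrt, Nat.factorial_succ]
  push_cast
  field_simp
  ring

/-- The Jacobi polynomials `{P̃_n^{(-1,-1)}}_{n≥0}` are orthonormal with respect to the
Sobolev inner product `φ`. -/
theorem jacobi_sobolev_orthonormal (m n : ℕ) :
    sobolevIP (Ptilde m) (Ptilde n) = if m = n then 1 else 0 := by
  wlog hmn : m ≤ n generalizing m n
  · rw [sobolevIP_comm, this n m (le_of_not_ge hmn)]
    exact if_congr eq_comm rfl rfl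
  obtain hn | ⟨k, rfl⟩ : n ≤ 1 ∨ ∃ k, n = k + 2 := by
    rcases n with _ | _ | k <;> simp
  · interval_cases n <;> interval_cases m <;>
      simp only [Ptilde_eq_eval, sobolevIP_eval] <;> norm_num [jacobiPoly, mul_assoc, ← mul_inv]
  · rcases hmn.lt_or_eq with h | rfl
    · rw [sobolevIP_Ptilde_of_lt h, if_neg h.ne]
    · rw [sobolevIP_Ptilde_add_two_self, if_pos rfl]
end

section
/- The sets W₁ and V₁ coincide: a function f belongs to W₁ = {f : f ∈ AC[-1,1], f' ∈ L²(-1,1), f(1) = f(-1) = 0} if and only if f (restricted to (-1,1)) belongs to V₁ = {f:(-1,1)→ℂ : f ∈ AC_loc(-1,1), f ∈ L²((-1,1);(1-x²)^{-1}dx), f' ∈ L²(-1,1)}. -/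
open MeasureTheory Set

/-- Membership in `W₁ = {f : f ∈ AC[-1,1], f' ∈ L²(-1,1), f(1) = f(-1) = 0}`,
encoded via the derivative function `f'`. -/
def InW1 (f f' : ℝ → ℂ) : Prop :=
  (∀ x ∈ Icc (-1 : ℝ) 1, ∀ y ∈ Icc (-1 : ℝ) 1, f y - f x = ∫ t in x..y, f' t) ∧
  IntervalIntegrable f' volume (-1) 1 ∧
  IntegrableOn (fun x => ‖f' x‖ ^ 2) (Ioo (-1 : ℝ) 1) ∧
  f 1 = 0 ∧ f (-1) = 0

/-- Membership in
`V₁ = {f : (-1,1) → ℂ | f ∈ AC_loc(-1,1), f ∈ L²((-1,1);(1-x²)⁻¹dx), f' ∈ L²(-1,1)}`,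
encoded via the derivative function `f'`. -/
def InV1 (f f' : ℝ → ℂ) : Prop :=
  (∀ x ∈ Ioo (-1 : ℝ) 1, ∀ y ∈ Ioo (-1 : ℝ) 1, IntervalIntegrable f' volume x y) ∧
  (∀ x ∈ Ioo (-1 : ℝ) 1, ∀ y ∈ Ioo (-1 : ℝ) 1, f y - f x = ∫ t in x..y, f' t) ∧
  IntegrableOn (fun x => ‖f x‖ ^ 2 * (1 - x ^ 2)⁻¹) (Ioo (-1 : ℝ) 1) ∧
  IntegrableOn (fun x => ‖f' x‖ ^ 2) (Ioo (-1 : ℝ) 1)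

/-! For `f ∈ W₁`, Cauchy–Schwarz gives `‖f x‖² = ‖∫ₓ¹ f'‖² ≤ (1 - x) ‖f'‖₂²` and likewise
`‖f x‖² ≤ (1 + x) ‖f'‖₂²`, so `‖f x‖² / (1 - x²) ≤ ‖f'‖₂²` is bounded on `(-1, 1)`.

Conversely, for `f ∈ V₁` we have `f' ∈ L²(-1, 1) ⊆ L¹(-1, 1)`, so `f 0 + ∫₀ˣ f'` extends `f`
continuously to `[-1, 1]`. If its value at `±1` were nonzero, `‖f x‖² / (1 - x²)` would be
bounded below near that endpoint by a multiple of `1 / (1 ∓ x)`, which is not integrable there. -/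

open Filter Topology Asymptotics

section

variable {E : Type*} [NormedAddCommGroup E]

theorem IntervalIntegrable.of_mem_Icc {μ : Measure ℝ} {f : ℝ → E} {a b x y : ℝ}
    (hf : IntervalIntegrable f μ a b) (hx : x ∈ Icc a b) (hy : y ∈ Icc a b) :
    IntervalIntegrable f μ x y :=
  hf.mono_set ((uIcc_subset_Icc hx hy).trans Icc_subset_uIcc)

theorem sq_norm_intervalIntegral_le [NormedSpace ℝ E] {h : ℝ → E} {a b : ℝ} (hab : a ≤ b)
    (hh : IntervalIntegrable h volume a b)
    (hsq : IntervalIntegrable (fun t => ‖h t‖ ^ 2) volume a b) :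
    ‖∫ t in a..b, h t‖ ^ 2 ≤ (b - a) * ∫ t in a..b, ‖h t‖ ^ 2 := by
  rcases hab.eq_or_lt with rfl | hlt
  · simp
  have hne : b - a ≠ 0 := (sub_pos.2 hlt).ne'
  have jensen : (⨍ t in a..b, ‖h t‖) ^ 2 ≤ ⨍ t in a..b, ‖h t‖ ^ 2 := by
    rw [uIoc_of_le hab]
    exact (convexOn_pow 2).map_set_average_le (continuousOn_pow 2) isClosed_Ici (by simp [hlt])
      (by simp) (ae_of_all _ fun t => norm_nonneg (h t)) hh.1.norm hsq.1
  calc ‖∫ t in a..b, h t‖ ^ 2 ≤ (∫ t in a..b, ‖h t‖) ^ 2 := by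
        gcongr; exact intervalIntegral.norm_integral_le_integral_norm hab
    _ = (b - a) ^ 2 * (⨍ t in a..b, ‖h t‖) ^ 2 := by
        rw [interval_average_eq, smul_eq_mul]; field_simp
    _ ≤ (b - a) ^ 2 * ⨍ t in a..b, ‖h t‖ ^ 2 := by gcongr
    _ = (b - a) * ∫ t in a..b, ‖h t‖ ^ 2 := by
        rw [interval_average_eq, smul_eq_mul]; field_simp

theorem sq_norm_sub_le_of_sub_eq_intervalIntegral [NormedSpace ℝ E] {f f' : ℝ → E}
    {a b x y : ℝ} (hf : ∀ x ∈ Icc a b, ∀ y ∈ Icc a b, f y - f x = ∫ t in x..y, f' t)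
    (hf' : IntervalIntegrable f' volume a b)
    (hsq : IntervalIntegrable (fun t => ‖f' t‖ ^ 2) volume a b)
    (hax : a ≤ x) (hxy : x ≤ y) (hyb : y ≤ b) :
    ‖f y - f x‖ ^ 2 ≤ (y - x) * ∫ t in a..b, ‖f' t‖ ^ 2 := by
  have hx : x ∈ Icc a b := ⟨hax, hxy.trans hyb⟩
  have hy : y ∈ Icc a b := ⟨hax.trans hxy, hyb⟩
  rw [hf x hx y hy]
  refine (sq_norm_intervalIntegral_le hxy (hf'.of_mem_Icc hx hy) (hsq.of_mem_Icc hx hy)).trans ?_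
  gcongr
  exact intervalIntegral.integral_mono_interval hax hxy hyb
    (ae_of_all _ fun t => by positivity) hsq

theorem continuousOn_Icc_of_sub_eq_intervalIntegral [NormedSpace ℝ E] {f f' : ℝ → E} {a b : ℝ}
    (hab : a ≤ b) (hf' : IntervalIntegrable f' volume a b)
    (hf : ∀ y ∈ Icc a b, f y - f a = ∫ t in a..y, f' t) : ContinuousOn f (Icc a b) := by
  have hprim := intervalIntegral.continuousOn_primitive_interval' hf' left_mem_uIcc
  rw [uIcc_of_le hab] at hprim
  exact (continuousOn_const.add hprim).congr fun y hy => eq_add_of_sub_eq' (hf y hy)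

theorem locallyIntegrableOn_Ioo_of_intervalIntegrable {f : ℝ → E} {a b : ℝ}
    (hf : ∀ x ∈ Ioo a b, ∀ y ∈ Ioo a b, IntervalIntegrable f volume x y) :
    LocallyIntegrableOn f (Ioo a b) := by
  intro x hx
  obtain ⟨y, hay, hyx⟩ := exists_between hx.1
  obtain ⟨z, hxz, hzb⟩ := exists_between hx.2
  refine ⟨Icc y z, nhdsWithin_le_nhds (Icc_mem_nhds hyx hxz), ?_⟩
  exact (intervalIntegrable_iff_integrableOn_Icc_of_le (hyx.trans hxz).le).1
    (hf y ⟨hay, hyx.trans hx.2⟩ z ⟨hx.1.trans hxz, hzb⟩)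

theorem IntegrableOn.of_integrableOn_sq_norm {α : Type*} [MeasurableSpace α] {μ : Measure α}
    {f : α → E} {s : Set α} (hs : μ s ≠ ⊤) (hf : AEStronglyMeasurable f (μ.restrict s))
    (hsq : IntegrableOn (fun x => ‖f x‖ ^ 2) s μ) : IntegrableOn f s μ :=
  have : Fact (μ s < ⊤) := ⟨hs.lt_top⟩
  ((memLp_two_iff_integrable_sq_norm hf).2 hsq).integrable one_le_two

theorem not_integrableAtFilter_inv_sub_nhdsLT (b : ℝ) :
    ¬ IntegrableAtFilter (fun x => (b - x)⁻¹) (𝓝[<] b) := by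
  rintro ⟨s, hs, hint⟩
  obtain ⟨a, ha, hsub⟩ := mem_nhdsLT_iff_exists_Ioo_subset.1 hs
  have : IntervalIntegrable (fun x => (x - b)⁻¹) volume a b := by
    refine (intervalIntegrable_iff_integrableOn_Ioo_of_le (le_of_lt ha)).2 ?_
    simpa only [Pi.neg_def, ← inv_neg, neg_sub] using (hint.mono_set hsub).neg
  rcases intervalIntegrable_sub_inv_iff.1 this with h | h
  · exact (ne_of_lt ha) h
  · exact h right_mem_uIcc

theorem not_integrableAtFilter_sub_inv_nhdsGT (a : ℝ) :
    ¬ IntegrableAtFilter (fun x => (x - a)⁻¹) (𝓝[>] a) := by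
  rintro ⟨s, hs, hint⟩
  obtain ⟨b, hb, hsub⟩ := mem_nhdsGT_iff_exists_Ioo_subset.1 hs
  have : IntervalIntegrable (fun x => (x - a)⁻¹) volume a b :=
    (intervalIntegrable_iff_integrableOn_Ioo_of_le (le_of_lt hb)).2 (hint.mono_set hsub)
  rcases intervalIntegrable_sub_inv_iff.1 this with h | h
  · exact (ne_of_lt hb) h
  · exact h left_mem_uIcc

theorem eq_zero_of_tendsto_of_integrableAtFilter_smul [NormedSpace ℝ E] {α : Type*}
    [MeasurableSpace α] {μ : Measure α} {l : Filter α} [l.IsMeasurablyGenerated] {w : α → ℝ}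
    {u : α → E} {L : E} (hw : ¬ IntegrableAtFilter w l μ) (hwm : StronglyMeasurableAtFilter w l μ)
    (hu : Tendsto u l (𝓝 L)) (hwu : IntegrableAtFilter (fun x => w x • u x) l μ) : L = 0 := by
  by_contra hL
  have hone : (fun _ => (1 : ℝ)) =O[l] u := (isBigO_const_left_iff_pos_le_norm one_ne_zero).2
    ⟨‖L‖ / 2, by positivity, hu.norm.eventually (eventually_ge_nhds (by simpa using hL))⟩
  have hO : w =O[l] fun x => w x • u x := by
    simpa using (isBigO_refl w l).smul hone
  exact hw (hO.integrableAtFilter hwm hwu)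

theorem eq_zero_of_tendsto_nhdsLT_of_integrableOn [NormedSpace ℝ E] {u : ℝ → E} {a b : ℝ}
    {L : E} (hab : a < b) (hu : Tendsto u (𝓝[<] b) (𝓝 L))
    (hi : IntegrableOn (fun x => (b - x)⁻¹ • u x) (Ioo a b)) : L = 0 :=
  eq_zero_of_tendsto_of_integrableAtFilter_smul (not_integrableAtFilter_inv_sub_nhdsLT b)
    (ContinuousOn.stronglyMeasurableAtFilter_nhdsWithin
      (ContinuousOn.inv₀ (by fun_prop) fun x hx => (sub_pos.2 hx).ne') measurableSet_Iio b) hu ⟨Ioo a b, Ioo_mem_nhdsLT hab, hi⟩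

theorem eq_zero_of_tendsto_nhdsGT_of_integrableOn [NormedSpace ℝ E] {u : ℝ → E} {a b : ℝ}
    {L : E} (hab : a < b) (hu : Tendsto u (𝓝[>] a) (𝓝 L))
    (hi : IntegrableOn (fun x => (x - a)⁻¹ • u x) (Ioo a b)) : L = 0 :=
  eq_zero_of_tendsto_of_integrableAtFilter_smul (not_integrableAtFilter_sub_inv_nhdsGT a)
    (ContinuousOn.stronglyMeasurableAtFilter_nhdsWithin
      (ContinuousOn.inv₀ (by fun_prop) fun x hx => (sub_pos.2 hx).ne') measurableSet_Ioi a) hu ⟨Ioo a b, Ioo_mem_nhdsGT hab, hi⟩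

theorem ContinuousOn.eq_zero_at_endpoints_of_integrableOn_sq_norm_mul_inv {g : ℝ → E}
    (hgc : ContinuousOn g (Icc (-1) 1))
    (hw : IntegrableOn (fun x => ‖g x‖ ^ 2 * (1 - x ^ 2)⁻¹) (Ioo (-1) 1)) :
    g 1 = 0 ∧ g (-1) = 0 := by
  have hright : Tendsto (fun x => (1 + x)⁻¹ * ‖g x‖ ^ 2) (𝓝[<] 1) (𝓝 ((1 + 1)⁻¹ * ‖g 1‖ ^ 2)) :=
    ((continuousAt_const.add continuousAt_id).inv₀ (by norm_num)).continuousWithinAt.mul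
      (((hgc 1 (right_mem_Icc.2 (by norm_num))).mono_of_mem_nhdsWithin
        (Icc_mem_nhdsLT (by norm_num))).norm.pow 2)
  have hleft : Tendsto (fun x => (1 - x)⁻¹ * ‖g x‖ ^ 2) (𝓝[>] (-1))
      (𝓝 ((1 - -1)⁻¹ * ‖g (-1)‖ ^ 2)) :=
    ((continuousAt_const.sub continuousAt_id).inv₀ (by norm_num)).continuousWithinAt.mul
      (((hgc (-1) (left_mem_Icc.2 (by norm_num))).mono_of_mem_nhdsWithin
        (Icc_mem_nhdsGT (by norm_num))).norm.pow 2)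
  have h1 := eq_zero_of_tendsto_nhdsLT_of_integrableOn (by norm_num) hright
    (hw.congr_fun (fun x _ => by rw [smul_eq_mul, ← mul_assoc, ← mul_inv,
      show (1 - x) * (1 + x) = 1 - x ^ 2 by ring, mul_comm]) measurableSet_Ioo)
  have h2 := eq_zero_of_tendsto_nhdsGT_of_integrableOn (by norm_num) hleft
    (hw.congr_fun (fun x _ => by rw [smul_eq_mul, ← mul_assoc, ← mul_inv,
      show (x - -1) * (1 - x) = 1 - x ^ 2 by ring, mul_comm]) measurableSet_Ioo)
  exact ⟨by simpa using h1, by simpa using h2⟩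

end

theorem InW1.inV1 {f f' : ℝ → ℂ} (h : InW1 f f') : InV1 f f' := by
  obtain ⟨hFTC, hf', hsq, hf1, hfm1⟩ := h
  refine ⟨fun x hx y hy => hf'.of_mem_Icc (Ioo_subset_Icc_self hx) (Ioo_subset_Icc_self hy),
    fun x hx y hy => hFTC x (Ioo_subset_Icc_self hx) y (Ioo_subset_Icc_self hy), ?_, hsq⟩
  have hsq' : IntervalIntegrable (fun t => ‖f' t‖ ^ 2) volume (-1) 1 :=
    (intervalIntegrable_iff_integrableOn_Ioo_of_le (by norm_num)).2 hsq
  set B := ∫ t in (-1 : ℝ)..1, ‖f' t‖ ^ 2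
  have hcont : ContinuousOn f (Icc (-1) 1) :=
    continuousOn_Icc_of_sub_eq_intervalIntegral (by norm_num) hf'
      fun y hy => hFTC (-1) (left_mem_Icc.2 (by norm_num)) y hy
  have hmeas : AEStronglyMeasurable (fun x => ‖f x‖ ^ 2 * (1 - x ^ 2)⁻¹)
      (volume.restrict (Ioo (-1) 1)) :=
    (((hcont.mono Ioo_subset_Icc_self).norm.pow 2).mul (ContinuousOn.inv₀ (by fun_prop)
      fun x hx => by nlinarith [hx.1, hx.2])).aestronglyMeasurable measurableSet_Ioo
  refine IntegrableOn.of_bound measure_Ioo_lt_top hmeas B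
    ((ae_restrict_iff' measurableSet_Ioo).2 (ae_of_all _ fun x hx => ?_))
  have hpos : 0 < 1 - x ^ 2 := by nlinarith [hx.1, hx.2]
  have hB : 0 ≤ B := intervalIntegral.integral_nonneg (by norm_num) fun t _ => by positivity
  have hleft := sq_norm_sub_le_of_sub_eq_intervalIntegral hFTC hf' hsq' le_rfl hx.1.le hx.2.le
  have hright := sq_norm_sub_le_of_sub_eq_intervalIntegral hFTC hf' hsq' hx.1.le hx.2.le le_rfl
  rw [hfm1, sub_zero] at hleft
  rw [hf1, zero_sub, norm_neg] at hright
  rw [Real.norm_of_nonneg (by positivity), mul_inv_le_iff₀ hpos]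
  rcases le_total 0 x with h0 | h0 <;> nlinarith

theorem InV1.exists_inW1 {f f' : ℝ → ℂ} (h : InV1 f f') :
    ∃ g : ℝ → ℂ, (∀ x ∈ Ioo (-1 : ℝ) 1, g x = f x) ∧ InW1 g f' := by
  obtain ⟨hloc, hFTC, hw, hsq⟩ := h
  have hf' : IntervalIntegrable f' volume (-1) 1 :=
    (intervalIntegrable_iff_integrableOn_Ioo_of_le (by norm_num)).2
      (IntegrableOn.of_integrableOn_sq_norm measure_Ioo_lt_top.ne
        (locallyIntegrableOn_Ioo_of_intervalIntegrable hloc).aestronglyMeasurable hsq)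
  set g : ℝ → ℂ := fun x => f 0 + ∫ t in (0 : ℝ)..x, f' t
  have h0 : (0 : ℝ) ∈ Icc (-1) 1 := ⟨by norm_num, by norm_num⟩
  have hgf : ∀ x ∈ Ioo (-1 : ℝ) 1, g x = f x := fun x hx => by
    simp only [g, ← hFTC 0 (by norm_num) x hx, add_sub_cancel]
  have hgFTC : ∀ x ∈ Icc (-1 : ℝ) 1, ∀ y ∈ Icc (-1 : ℝ) 1, g y - g x = ∫ t in x..y, f' t :=
    fun x hx y hy => by
      simp only [g, add_sub_add_left_eq_sub]
      exact intervalIntegral.integral_interval_sub_left (hf'.of_mem_Icc h0 hy)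
        (hf'.of_mem_Icc h0 hx)
  have hgc : ContinuousOn g (Icc (-1) 1) :=
    continuousOn_Icc_of_sub_eq_intervalIntegral (by norm_num) hf'
      fun y hy => hgFTC (-1) (left_mem_Icc.2 (by norm_num)) y hy
  obtain ⟨hg1, hgm1⟩ := hgc.eq_zero_at_endpoints_of_integrableOn_sq_norm_mul_inv
    (hw.congr_fun (fun x hx => by rw [hgf x hx]) measurableSet_Ioo)
  exact ⟨g, hgf, hgFTC, hf', hsq, hg1, hgm1⟩

/-- `W₁ = V₁`: every `f ∈ W₁` lies in `V₁` (in particular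
`f ∈ L²((-1,1);(1-x²)⁻¹dx)`), and conversely every `f ∈ V₁` extends continuously to
`[-1,1]` with boundary values `0`, giving an element of `W₁`. -/
theorem W1_eq_V1 :
    (∀ f f' : ℝ → ℂ, InW1 f f' → InV1 f f') ∧
    (∀ f f' : ℝ → ℂ, InV1 f f' →
      ∃ g : ℝ → ℂ, (∀ x ∈ Ioo (-1 : ℝ) 1, g x = f x) ∧ InW1 g f') :=
  ⟨fun _ _ h => h.inV1, fun _ _ h => h.exists_inW1⟩
end

section
/- Fix k > 0 and let f, g ∈ V₃. Then lim_{x→1⁻} (1-x²)f''(x)ḡ'(x) = 0 and lim_{x→-1⁺} (1-x²)f''(x)ḡ'(x) = 0. -/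
/-!
Write `u = f''`, `v = g'` and `P = (1 - x²) u v̄`. Near `x = 1`, integrating `(1 - x) ‖u‖²` by
parts gives a Hardy inequality which turns `(1 - x²) u' ∈ L²` into `u ∈ L²`. Together with
`v ∈ L²` and the weighted bounds on `u` and `v'`, this makes
`P' = -2x u v̄ + (1 - x²) (u' v̄ + u v̄')` integrable, so `P` has a limit `L` at `1`. Since
`‖P‖ / (1 - x) ≤ ‖u‖² + ‖v‖²` is integrable near `1` while `1 / (1 - x)` is not, `L = 0`. The
endpoint `-1` follows by the reflection `x ↦ -x`.
-/

open MeasureTheory Set Filter Topology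

/-- Membership in the third left-definite space
`V₃ = {f : (-1,1) → ℂ | f, f', f'' ∈ AC_loc(-1,1); (1-x²)f''' ∈ L²(-1,1),
(1-x²)^{1/2}f'' ∈ L²(-1,1), f' ∈ L²(-1,1), (1-x²)^{-1/2}f ∈ L²(-1,1)}`,
encoded via the derivative functions `f', f'', f'''`. -/
def InV3 (f f' f'' f''' : ℝ → ℂ) : Prop :=
  (∀ x ∈ Ioo (-1 : ℝ) 1, ∀ y ∈ Ioo (-1 : ℝ) 1, IntervalIntegrable f' volume x y) ∧
  (∀ x ∈ Ioo (-1 : ℝ) 1, ∀ y ∈ Ioo (-1 : ℝ) 1, IntervalIntegrable f'' volume x y) ∧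
  (∀ x ∈ Ioo (-1 : ℝ) 1, ∀ y ∈ Ioo (-1 : ℝ) 1, IntervalIntegrable f''' volume x y) ∧
  (∀ x ∈ Ioo (-1 : ℝ) 1, ∀ y ∈ Ioo (-1 : ℝ) 1, f y - f x = ∫ t in x..y, f' t) ∧
  (∀ x ∈ Ioo (-1 : ℝ) 1, ∀ y ∈ Ioo (-1 : ℝ) 1, f' y - f' x = ∫ t in x..y, f'' t) ∧
  (∀ x ∈ Ioo (-1 : ℝ) 1, ∀ y ∈ Ioo (-1 : ℝ) 1, f'' y - f'' x = ∫ t in x..y, f''' t) ∧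
  IntegrableOn (fun x => (1 - x ^ 2) ^ 2 * ‖f''' x‖ ^ 2) (Ioo (-1 : ℝ) 1) ∧
  IntegrableOn (fun x => (1 - x ^ 2) * ‖f'' x‖ ^ 2) (Ioo (-1 : ℝ) 1) ∧
  IntegrableOn (fun x => ‖f' x‖ ^ 2) (Ioo (-1 : ℝ) 1) ∧
  IntegrableOn (fun x => ‖f x‖ ^ 2 * (1 - x ^ 2)⁻¹) (Ioo (-1 : ℝ) 1)

section

variable {𝕜 : Type*} [RCLike 𝕜]

theorem AbsolutelyContinuousOnInterval.congr {X : Type*} [PseudoMetricSpace X] {f g : ℝ → X}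
    {a b : ℝ} (hf : AbsolutelyContinuousOnInterval f a b) (hfg : EqOn f g (uIcc a b)) :
    AbsolutelyContinuousOnInterval g a b := by
  refine hf.congr' (eventually_inf_principal.2 (Eventually.of_forall fun E hE => ?_))
  refine Finset.sum_congr rfl fun i hi => ?_
  rw [hfg (hE.1 i hi).1, hfg (hE.1 i hi).2]

theorem AbsolutelyContinuousOnInterval.ofReal {g : ℝ → ℝ} {a b : ℝ}
    (hg : AbsolutelyContinuousOnInterval g a b) :
    AbsolutelyContinuousOnInterval (fun x => (g x : 𝕜)) a b := by
  simpa only [AbsolutelyContinuousOnInterval, dist_eq_norm, ← RCLike.ofReal_sub,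
    RCLike.norm_ofReal, Real.norm_eq_abs] using hg

theorem IntervalIntegrable.absolutelyContinuousOnInterval_intervalIntegral_rclike {f : ℝ → 𝕜}
    {a b c : ℝ} (hf : IntervalIntegrable f volume a b) (hc : c ∈ uIcc a b) :
    AbsolutelyContinuousOnInterval (fun x => ∫ t in c..x, f t) a b := by
  have hre := (IntervalIntegrable.absolutelyContinuousOnInterval_intervalIntegral
    (f := fun t => RCLike.re (f t)) ⟨hf.1.re, hf.2.re⟩ hc).ofReal (𝕜 := 𝕜)
  have him := (IntervalIntegrable.absolutelyContinuousOnInterval_intervalIntegral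
    (f := fun t => RCLike.im (f t)) ⟨hf.1.im, hf.2.im⟩ hc).ofReal (𝕜 := 𝕜)
  refine (hre.add (him.const_smul (RCLike.I : 𝕜))).congr fun x hx => ?_
  have hcx : IntervalIntegrable f volume c x := hf.mono_set (uIcc_subset_uIcc hc hx)
  simp only [Pi.add_apply, smul_eq_mul, intervalIntegral.intervalIntegral_re hcx,
    intervalIntegral.intervalIntegral_im hcx]
  rw [mul_comm, RCLike.re_add_im]

theorem IntervalIntegrable.star {f : ℝ → 𝕜} {a b : ℝ} (hf : IntervalIntegrable f volume a b) :
    IntervalIntegrable (fun t => star (f t)) volume a b :=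
  ⟨(RCLike.conjCLE (K := 𝕜) : 𝕜 →L[ℝ] 𝕜).integrable_comp hf.1,
    (RCLike.conjCLE (K := 𝕜) : 𝕜 →L[ℝ] 𝕜).integrable_comp hf.2⟩

theorem HasDerivAt.ofReal_comp_rclike {f : ℝ → ℝ} {f' x : ℝ} (hf : HasDerivAt f f' x) :
    HasDerivAt (fun t => (f t : 𝕜)) (f' : 𝕜) x :=
  (RCLike.ofRealCLM (K := 𝕜)).hasFDerivAt.comp_hasDerivAt x hf

section IntegrableOn

variable {E : Type*} [NormedAddCommGroup E] {f : ℝ → E} {c b : ℝ}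

theorem integrableOn_Ioo_of_setIntegral_norm_Ioc_le {I : ℝ}
    (hf : ∀ y ∈ Ioo c b, IntegrableOn f (Ioc c y))
    (hI : ∀ y ∈ Ioo c b, ∫ x in Ioc c y, ‖f x‖ ≤ I) : IntegrableOn f (Ioo c b) := by
  rcases lt_or_ge c b with hcb | hbc
  · obtain ⟨y, -, hy, hyb⟩ := exists_seq_strictMono_tendsto' hcb
    exact (integrableOn_Ioc_of_intervalIntegral_norm_bounded_right (fun n => hf _ (hy n)) hyb
      (Eventually.of_forall fun n => hI _ (hy n))).mono_set Ioo_subset_Ioc_self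
  · simp [Ioo_eq_empty hbc.not_gt]

theorem integrableOn_Ioo_of_norm_le {g : ℝ → ℝ} (hf : ∀ y ∈ Ioo c b, IntegrableOn f (Ioc c y))
    (hg : IntegrableOn g (Ioo c b)) (hfg : ∀ x ∈ Ioo c b, ‖f x‖ ≤ g x) :
    IntegrableOn f (Ioo c b) :=
  integrableOn_Ioo_of_setIntegral_norm_Ioc_le hf fun y hy =>
    (setIntegral_mono_on (hf y hy).norm (hg.mono_set (Ioc_subset_Ioo_right hy.2))
      measurableSet_Ioc fun x hx => hfg x ⟨hx.1, hx.2.trans_lt hy.2⟩).trans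
    (setIntegral_mono_set hg (ae_restrict_of_forall_mem measurableSet_Ioo fun x hx =>
      (norm_nonneg _).trans (hfg x hx)) (Ioc_subset_Ioo_right hy.2).eventuallyLE)

theorem eq_zero_of_tendsto_nhdsLT_of_integrableOn_norm_div {L : E} (hcb : c < b)
    (hf : Tendsto f (𝓝[<] b) (𝓝 L))
    (hint : IntegrableOn (fun t => ‖f t‖ / (b - t)) (Ioo c b)) : L = 0 := by
  by_contra hL
  have hL' : 0 < ‖L‖ := norm_pos_iff.2 hL
  obtain ⟨x, hxb, hx⟩ := mem_nhdsLT_iff_exists_Ioo_subset.1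
    ((hf.norm.eventually (eventually_ge_nhds (half_lt_self hL'))).and (Ioo_mem_nhdsLT hcb))
  have hinv : IntegrableOn (fun t => (b - t)⁻¹) (Ioo x b) := by
    refine Integrable.mono' ((hint.mono_set fun t ht => (hx ht).2).const_mul (2 / ‖L‖))
      ((ContinuousOn.inv₀ (by fun_prop) fun t ht => (sub_pos.2 ht.2).ne').aestronglyMeasurable
        measurableSet_Ioo)
      (ae_restrict_of_forall_mem measurableSet_Ioo fun t ht => ?_)
    have hbt : 0 < b - t := sub_pos.2 ht.2
    rw [Real.norm_of_nonneg (inv_nonneg.2 hbt.le)]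
    field_simp
    linarith [(hx ht).1]
  have : IntervalIntegrable (fun t => (t - b)⁻¹) volume x b := by
    refine (intervalIntegrable_iff_integrableOn_Ioo_of_le hxb.le).2 (hinv.neg.congr_fun
      (fun t _ => ?_) measurableSet_Ioo)
    simp [← inv_neg]
  rw [intervalIntegrable_sub_inv_iff] at this
  exact this.elim hxb.ne fun h => h right_mem_uIcc

end IntegrableOn

/-- `u` is locally absolutely continuous on `s`, with derivative `u'` almost everywhere. -/
def IsPrimitiveOn (u u' : ℝ → 𝕜) (s : Set ℝ) : Prop :=
  ∀ x ∈ s, ∀ y ∈ s, IntervalIntegrable u' volume x y ∧ u y - u x = ∫ t in x..y, u' t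

namespace IsPrimitiveOn

variable {u u' v v' : ℝ → 𝕜} {s t : Set ℝ}

theorem mono (h : IsPrimitiveOn u u' s) (hts : t ⊆ s) : IsPrimitiveOn u u' t :=
  fun x hx y hy => h x (hts hx) y (hts hy)

theorem eqOn_uIcc (h : IsPrimitiveOn u u' s) {x y : ℝ} (hx : x ∈ s) (hs : uIcc x y ⊆ s) :
    EqOn (fun t => u x + ∫ τ in x..t, u' τ) u (uIcc x y) := fun t ht => by
  simp only [← (h x hx t (hs ht)).2, add_sub_cancel]

theorem absolutelyContinuousOnInterval {x y : ℝ} (h : IsPrimitiveOn u u' (uIcc x y)) :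
    AbsolutelyContinuousOnInterval u x y :=
  ((LipschitzWith.const (u x)).lipschitzOnWith.absolutelyContinuousOnInterval.add
    ((h x left_mem_uIcc y right_mem_uIcc).1.absolutelyContinuousOnInterval_intervalIntegral_rclike
      left_mem_uIcc)).congr (h.eqOn_uIcc left_mem_uIcc subset_rfl)

theorem continuousOn {x y : ℝ} (h : IsPrimitiveOn u u' (uIcc x y)) : ContinuousOn u (uIcc x y) :=
  h.absolutelyContinuousOnInterval.continuousOn

theorem mul [s.OrdConnected] (hu : IsPrimitiveOn u u' s) (hv : IsPrimitiveOn v v' s) :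
    IsPrimitiveOn (u * v) (u' * v + u * v') s := by
  intro x hx y hy
  have hs : uIcc x y ⊆ s := Set.OrdConnected.uIcc_subset ‹_› hx hy
  have hint : IntervalIntegrable (u' * v + u * v') volume x y :=
    ((hu x hx y hy).1.mul_continuousOn (hv.mono hs).continuousOn).add
      ((hv x hx y hy).1.continuousOn_mul (hu.mono hs).continuousOn)
  -- `W` is absolutely continuous with derivative `0` at almost every point (Lebesgue
  -- differentiation), hence constant on `[[x, y]]`.
  set W : ℝ → 𝕜 := fun t => (u x + ∫ τ in x..t, u' τ) * (v x + ∫ τ in x..t, v' τ) -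
    ∫ τ in x..t, (u' * v + u * v') τ
  have hW : AbsolutelyContinuousOnInterval W x y :=
    (((hu.mono hs).absolutelyContinuousOnInterval.congr (hu.eqOn_uIcc hx hs).symm).fun_smul
      ((hv.mono hs).absolutelyContinuousOnInterval.congr (hv.eqOn_uIcc hx hs).symm)).sub
      (hint.absolutelyContinuousOnInterval_intervalIntegral_rclike left_mem_uIcc)
  obtain ⟨C, hC⟩ := hW.const_of_ae_hasDerivAt_zero (by
    filter_upwards [(hu x hx y hy).1.ae_hasDerivAt_integral,
      (hv x hx y hy).1.ae_hasDerivAt_integral, hint.ae_hasDerivAt_integral]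
      with t hdu hdv hdw ht
    have := (((hdu ht x left_mem_uIcc).const_add (u x)).mul
      ((hdv ht x left_mem_uIcc).const_add (v x))).sub (hdw ht x left_mem_uIcc)
    have hut : u x + ∫ τ in x..t, u' τ = u t := hu.eqOn_uIcc hx hs ht
    have hvt : v x + ∫ τ in x..t, v' τ = v t := hv.eqOn_uIcc hx hs ht
    rwa [hut, hvt, Pi.add_apply, Pi.mul_apply, Pi.mul_apply, sub_self] at this)
  refine ⟨hint, ?_⟩
  have hWx := hC x left_mem_uIcc
  have hWy := hC y right_mem_uIcc
  simp only [W, intervalIntegral.integral_same, add_zero, sub_zero] at hWx hWy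
  rw [← (hu x hx y hy).2, ← (hv x hx y hy).2, add_sub_cancel, add_sub_cancel] at hWy
  rw [Pi.mul_apply, Pi.mul_apply, hWx, ← hWy]
  ring

theorem of_hasDerivAt (hu : ∀ x, HasDerivAt u (u' x) x) (hu' : Continuous u') (s : Set ℝ) :
    IsPrimitiveOn u u' s := fun x _ y _ =>
  ⟨hu'.intervalIntegrable x y, (intervalIntegral.integral_eq_sub_of_hasDerivAt
    (fun t _ => hu t) (hu'.intervalIntegrable x y)).symm⟩

theorem star (h : IsPrimitiveOn u u' s) :
    IsPrimitiveOn (fun t => star (u t)) (fun t => star (u' t)) s := fun x hx y hy =>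
  ⟨(h x hx y hy).1.star, by
    rw [← star_sub, (h x hx y hy).2]
    exact (intervalIntegral.intervalIntegral_conj (f := u')).symm⟩

theorem comp_neg (h : IsPrimitiveOn u u' s) :
    IsPrimitiveOn (fun t => u (-t)) (fun t => -u' (-t)) (-s) := by
  intro x hx y hy
  obtain ⟨hi, he⟩ := h (-y) hy (-x) hx
  refine ⟨?_, ?_⟩
  · have := ((IntervalIntegrable.iff_comp_neg (by finiteness)).1 hi).symm
    rw [neg_neg, neg_neg] at this
    exact this.neg
  · rw [intervalIntegral.integral_neg, intervalIntegral.integral_comp_neg, ← he, neg_sub]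

theorem tendsto_nhdsLT {c b : ℝ} (h : IsPrimitiveOn u u' (Ico c b)) (hcb : c < b)
    (hu' : IntegrableOn u' (Ioo c b)) :
    Tendsto u (𝓝[<] b) (𝓝 (u c + ∫ t in c..b, u' t)) := by
  have hprim := intervalIntegral.continuousOn_primitive_interval'
    ((intervalIntegrable_iff_integrableOn_Ioo_of_le hcb.le).2 hu') left_mem_uIcc
  rw [uIcc_of_le hcb.le] at hprim
  have := (hprim b (right_mem_Icc.2 hcb.le)).tendsto.mono_left
    (show 𝓝[<] b ≤ 𝓝[Icc c b] b by
      rw [← nhdsWithin_Ioo_eq_nhdsLT hcb]; exact nhdsWithin_mono _ Ioo_subset_Icc_self)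
  refine (tendsto_const_nhds.add this).congr' ?_
  filter_upwards [Ioo_mem_nhdsLT hcb] with y hy
  rw [← (h c (left_mem_Ico.2 hcb) y ⟨hy.1.le, hy.2⟩).2, add_sub_cancel]

theorem integral_norm_sq_le {b c y : ℝ}
    (hu : IsPrimitiveOn u u' (Icc c y)) (hcy : c ≤ y) (hyb : y ≤ b)
    (hu' : IntervalIntegrable (fun t => (b - t) ^ 2 * ‖u' t‖ ^ 2) volume c y) :
    ∫ t in c..y, ‖u t‖ ^ 2 ≤
      2 * ((b - c) * ‖u c‖ ^ 2) + 4 * ∫ t in c..y, (b - t) ^ 2 * ‖u' t‖ ^ 2 := by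
  have hN : IntervalIntegrable (fun t => ‖u t‖ ^ 2) volume c y := by
    rw [← uIcc_of_le hcy] at hu
    exact (hu.continuousOn.norm.pow 2).intervalIntegrable
  have hweight : IsPrimitiveOn (fun t => ((b - t : ℝ) : 𝕜)) (fun _ => -1) (Icc c y) :=
    .of_hasDerivAt (fun t => (((hasDerivAt_id t).const_sub b).ofReal_comp_rclike).congr_deriv
      (by simp)) continuous_const _
  obtain ⟨hint, heq⟩ := (hweight.mul (hu.mul hu.star)) c (left_mem_Icc.2 hcy) y
    (right_mem_Icc.2 hcy)
  have hmul : ∀ z : 𝕜, z * Star.star z = ((‖z‖ ^ 2 : ℝ) : 𝕜) := fun z => by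
    rw [RCLike.ofReal_pow]; exact RCLike.mul_conj z
  -- `(b - t) ‖u t‖²` has derivative `-‖u‖² + 2 (b - t) re (u' ū)`, and by AM-GM
  -- `2 (b - t) re (u' ū) ≤ 2 (b - t)² ‖u'‖² + ‖u‖² / 2`.
  have hle := intervalIntegral.integral_mono_on hcy ⟨hint.1.re, hint.2.re⟩
    ((hu'.const_mul 2).sub (hN.div_const 2)) fun t ht => by
      have h1 : RCLike.re (u' t * Star.star (u t)) ≤ ‖u' t‖ * ‖u t‖ :=
        (RCLike.re_le_norm _).trans (by rw [norm_mul, norm_star])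
      have h2 : RCLike.re (u t * Star.star (u' t)) ≤ ‖u' t‖ * ‖u t‖ :=
        (RCLike.re_le_norm _).trans (by rw [norm_mul, norm_star, mul_comm])
      simp only [Pi.mul_apply, Pi.add_apply, hmul, RCLike.re_ofReal_mul, RCLike.ofReal_re,
        neg_one_mul, map_neg, map_add]
      nlinarith [sq_nonneg (2 * (b - t) * ‖u' t‖ - ‖u t‖),
        mul_le_mul_of_nonneg_left (add_le_add h1 h2) (sub_nonneg.2 (ht.2.trans hyb))]
  rw [intervalIntegral.intervalIntegral_re hint, ← heq, intervalIntegral.integral_sub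
    (hu'.const_mul 2) (hN.div_const 2), intervalIntegral.integral_const_mul,
    intervalIntegral.integral_div] at hle
  simp only [Pi.mul_apply, hmul, ← RCLike.ofReal_mul, ← RCLike.ofReal_sub, RCLike.ofReal_re] at hle
  nlinarith [mul_nonneg (sub_nonneg.2 hyb) (sq_nonneg ‖u y‖)]

theorem integrableOn_norm_sq {c b : ℝ}
    (hu : IsPrimitiveOn u u' (Ico c b))
    (hu' : IntegrableOn (fun x => (b - x) ^ 2 * ‖u' x‖ ^ 2) (Ioo c b)) :
    IntegrableOn (fun x => ‖u x‖ ^ 2) (Ioo c b) := by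
  refine integrableOn_Ioo_of_setIntegral_norm_Ioc_le
    (I := 2 * ((b - c) * ‖u c‖ ^ 2) + 4 * ∫ x in Ioo c b, (b - x) ^ 2 * ‖u' x‖ ^ 2)
    (fun y hy => ?_) fun y hy => ?_
  · have hu : IsPrimitiveOn u u' (uIcc c y) := hu.mono (by
      rw [uIcc_of_le hy.1.le]; exact Icc_subset_Ico_right hy.2)
    exact ((hu.continuousOn.norm.pow 2).integrableOn_uIcc).mono_set
      (uIcc_of_le hy.1.le ▸ Ioc_subset_Icc_self)
  have hsub : Icc c y ⊆ Ico c b := Icc_subset_Ico_right hy.2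
  calc ∫ x in Ioc c y, ‖‖u x‖ ^ 2‖ = ∫ x in c..y, ‖u x‖ ^ 2 := by
        simp only [norm_pow, norm_norm, intervalIntegral.integral_of_le hy.1.le]
    _ ≤ 2 * ((b - c) * ‖u c‖ ^ 2) + 4 * ∫ t in c..y, (b - t) ^ 2 * ‖u' t‖ ^ 2 :=
        (hu.mono hsub).integral_norm_sq_le hy.1.le hy.2.le
          ((intervalIntegrable_iff_integrableOn_Ioc_of_le hy.1.le).2
            (hu'.mono_set (Ioc_subset_Ioo_right hy.2)))
    _ ≤ _ := by
        gcongr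
        rw [intervalIntegral.integral_of_le hy.1.le]
        exact setIntegral_mono_set hu' (ae_restrict_of_forall_mem measurableSet_Ioo
          fun t _ => by positivity) (Ioc_subset_Ioo_right hy.2).eventuallyLE

end IsPrimitiveOn

theorem integrableOn_one_sub_sq_mul_of_one_sub_sq_sq_mul {w : ℝ → ℝ}
    (hw : IntegrableOn (fun x => (1 - x ^ 2) ^ 2 * w x) (Ioo 0 1)) :
    IntegrableOn (fun x => (1 - x) ^ 2 * w x) (Ioo 0 1) := by
  refine IntegrableOn.congr_fun (hw.bdd_mul (c := 1) (f := fun x => ((1 + x) ^ 2)⁻¹) ?_ ?_)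
    (fun x hx => ?_) measurableSet_Ioo
  · exact (ContinuousOn.inv₀ (by fun_prop) fun x hx => (pow_pos (by linarith [hx.1]) 2).ne')
      |>.aestronglyMeasurable measurableSet_Ioo
  · exact ae_restrict_of_forall_mem measurableSet_Ioo fun x hx => by
      rw [norm_inv, norm_pow, Real.norm_of_nonneg (by linarith [hx.1])]
      exact inv_le_one_of_one_le₀ (one_le_pow₀ (by linarith [hx.1]))
  · have : 1 + x ≠ 0 := by linarith [hx.1]
    field_simp
    ring

theorem norm_deriv_one_sub_sq_mul_mul_star_le {t : ℝ} (ht : t ∈ Icc (0 : ℝ) 1) (u u' v v' : 𝕜) :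
    ‖((-2 * t : ℝ) : 𝕜) * u * star v + ((1 - t ^ 2 : ℝ) : 𝕜) * u' * star v +
        ((1 - t ^ 2 : ℝ) : 𝕜) * u * star v'‖ ≤
      ‖u‖ ^ 2 + ‖v‖ ^ 2 + ((1 - t ^ 2) ^ 2 * ‖u'‖ ^ 2 + ‖v‖ ^ 2) / 2 +
        ((1 - t ^ 2) * ‖u‖ ^ 2 + (1 - t ^ 2) * ‖v'‖ ^ 2) / 2 := by
  have hw : 0 ≤ 1 - t ^ 2 := by nlinarith [ht.1, ht.2]
  refine (norm_add₃_le ..).trans ?_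
  simp only [norm_mul, norm_star, RCLike.norm_ofReal, abs_of_nonneg hw,
    abs_of_nonpos (by linarith [ht.1] : -2 * t ≤ 0)]
  nlinarith [sq_nonneg (‖u‖ - ‖v‖), sq_nonneg ((1 - t ^ 2) * ‖u'‖ - ‖v‖),
    mul_nonneg hw (sq_nonneg (‖u‖ - ‖v'‖)), mul_nonneg (norm_nonneg u) (norm_nonneg v), ht.2]

theorem norm_one_sub_sq_mul_mul_star_div_le {t : ℝ} (ht : t ∈ Ico (0 : ℝ) 1) (u v : 𝕜) :
    ‖‖((1 - t ^ 2 : ℝ) : 𝕜) * u * star v‖ / (1 - t)‖ ≤ ‖u‖ ^ 2 + ‖v‖ ^ 2 := by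
  have h1t : 0 < 1 - t := sub_pos.2 ht.2
  rw [Real.norm_of_nonneg (by positivity), div_le_iff₀ h1t, norm_mul, norm_mul, norm_star,
    RCLike.norm_ofReal, abs_of_nonneg (by nlinarith [ht.1, ht.2])]
  nlinarith [mul_nonneg h1t.le (sq_nonneg (‖u‖ - ‖v‖)),
    mul_nonneg (mul_nonneg h1t.le h1t.le) (mul_nonneg (norm_nonneg u) (norm_nonneg v))]

theorem tendsto_one_sub_sq_mul_mul_star_nhdsLT_one {u u' v v' : ℝ → 𝕜}
    (hu : IsPrimitiveOn u u' (Ioo (-1) 1)) (hv : IsPrimitiveOn v v' (Ioo (-1) 1))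
    (hu'2 : IntegrableOn (fun x => (1 - x ^ 2) ^ 2 * ‖u' x‖ ^ 2) (Ioo (-1) 1))
    (hu2 : IntegrableOn (fun x => (1 - x ^ 2) * ‖u x‖ ^ 2) (Ioo (-1) 1))
    (hv'2 : IntegrableOn (fun x => (1 - x ^ 2) * ‖v' x‖ ^ 2) (Ioo (-1) 1))
    (hv2 : IntegrableOn (fun x => ‖v x‖ ^ 2) (Ioo (-1) 1)) :
    Tendsto (fun x => ((1 - x ^ 2 : ℝ) : 𝕜) * u x * star (v x)) (𝓝[<] 1) (𝓝 0) := by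
  have hI : Ioo (0 : ℝ) 1 ⊆ Ioo (-1) 1 := Ioo_subset_Ioo_left (by norm_num)
  have hu : IsPrimitiveOn u u' (Ico 0 1) := hu.mono (Ico_subset_Ioo_left (by norm_num))
  have hv : IsPrimitiveOn v v' (Ico 0 1) := hv.mono (Ico_subset_Ioo_left (by norm_num))
  have hsub : ∀ y ∈ Ioo (0 : ℝ) 1, uIcc 0 y ⊆ Ico 0 1 := fun y hy => by
    rw [uIcc_of_le hy.1.le]; exact Icc_subset_Ico_right hy.2
  have hu_sq : IntegrableOn (fun x => ‖u x‖ ^ 2) (Ioo 0 1) :=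
    hu.integrableOn_norm_sq
      (integrableOn_one_sub_sq_mul_of_one_sub_sq_sq_mul (hu'2.mono_set hI))
  have hweight : IsPrimitiveOn (fun t => ((1 - t ^ 2 : ℝ) : 𝕜)) (fun t => ((-2 * t : ℝ) : 𝕜))
      (Ico 0 1) :=
    .of_hasDerivAt (fun t => HasDerivAt.ofReal_comp_rclike (by
      simpa using (hasDerivAt_pow 2 t).const_sub 1)) (by fun_prop) _
  have hP : IsPrimitiveOn (fun t => ((1 - t ^ 2 : ℝ) : 𝕜) * u t * star (v t))
      (fun t => ((-2 * t : ℝ) : 𝕜) * u t * star (v t) + ((1 - t ^ 2 : ℝ) : 𝕜) * u' t * star (v t) +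
        ((1 - t ^ 2 : ℝ) : 𝕜) * u t * star (v' t)) (Ico 0 1) := by
    convert (hweight.mul hu).mul hv.star using 1
    · rfl
    · funext t
      simp only [Pi.mul_apply, Pi.add_apply]
      ring
  have hlim := hP.tendsto_nhdsLT one_pos (integrableOn_Ioo_of_norm_le
    (fun y hy => (intervalIntegrable_iff_integrableOn_Ioc_of_le hy.1.le).1
      (hP 0 (left_mem_Ico.2 one_pos) y ⟨hy.1.le, hy.2⟩).1)
    (((hu_sq.add (hv2.mono_set hI)).add
      (((hu'2.mono_set hI).add (hv2.mono_set hI)).div_const 2)).add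
        (((hu2.mono_set hI).add (hv'2.mono_set hI)).div_const 2))
    fun t ht => norm_deriv_one_sub_sq_mul_mul_star_le (Ioo_subset_Icc_self ht) _ _ _ _)
  have hquot : IntegrableOn (fun t => ‖((1 - t ^ 2 : ℝ) : 𝕜) * u t * star (v t)‖ / (1 - t))
      (Ioo 0 1) := by
    refine integrableOn_Ioo_of_norm_le (fun y hy => ?_) (hu_sq.add (hv2.mono_set hI))
      fun t ht => norm_one_sub_sq_mul_mul_star_div_le ⟨ht.1.le, ht.2⟩ _ _
    refine (ContinuousOn.integrableOn_Icc ?_).mono_set Ioc_subset_Icc_self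
    rw [← uIcc_of_le hy.1.le]
    exact (hP.mono (hsub y hy)).continuousOn.norm.div (by fun_prop)
      fun t ht => (sub_pos.2 (hsub y hy ht).2).ne'
  rwa [eq_zero_of_tendsto_nhdsLT_of_integrableOn_norm_div one_pos hlim hquot] at hlim

theorem tendsto_one_sub_sq_mul_mul_star_nhdsGT_neg_one {u u' v v' : ℝ → 𝕜}
    (hu : IsPrimitiveOn u u' (Ioo (-1) 1)) (hv : IsPrimitiveOn v v' (Ioo (-1) 1))
    (hu'2 : IntegrableOn (fun x => (1 - x ^ 2) ^ 2 * ‖u' x‖ ^ 2) (Ioo (-1) 1))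
    (hu2 : IntegrableOn (fun x => (1 - x ^ 2) * ‖u x‖ ^ 2) (Ioo (-1) 1))
    (hv'2 : IntegrableOn (fun x => (1 - x ^ 2) * ‖v' x‖ ^ 2) (Ioo (-1) 1))
    (hv2 : IntegrableOn (fun x => ‖v x‖ ^ 2) (Ioo (-1) 1)) :
    Tendsto (fun x => ((1 - x ^ 2 : ℝ) : 𝕜) * u x * star (v x)) (𝓝[>] (-1)) (𝓝 0) := by
  have hI : -Ioo (-1 : ℝ) 1 = Ioo (-1) 1 := by rw [neg_Ioo, neg_neg]
  have hrefl {w : ℝ → ℝ} (hw : IntegrableOn w (Ioo (-1) 1)) :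
      IntegrableOn (fun x => w (-x)) (Ioo (-1) 1) := hI ▸ hw.comp_neg
  have := tendsto_one_sub_sq_mul_mul_star_nhdsLT_one (hI ▸ hu.comp_neg) (hI ▸ hv.comp_neg)
    (by simpa using hrefl hu'2) (by simpa using hrefl hu2) (by simpa using hrefl hv'2)
    (hrefl hv2)
  simpa [Function.comp_def] using this.comp tendsto_neg_nhdsGT_neg

end

theorem V3_boundary_term_vanishes_general
    (f f' f'' f''' g g' g'' g''' : ℝ → ℂ)
    (hf : InV3 f f' f'' f''') (hg : InV3 g g' g'' g''') :
    Tendsto (fun x => ((1 - x ^ 2 : ℝ) : ℂ) * f'' x * star (g' x)) (𝓝[<] (1 : ℝ)) (𝓝 0) ∧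
    Tendsto (fun x => ((1 - x ^ 2 : ℝ) : ℂ) * f'' x * star (g' x)) (𝓝[>] (-1 : ℝ)) (𝓝 0) := by
  obtain ⟨-, -, hf''', -, -, hf'', hf'''2, hf''2, -, -⟩ := hf
  obtain ⟨-, hg'', -, -, hg', -, -, hg''2, hg'2, -⟩ := hg
  have hu : IsPrimitiveOn f'' f''' (Ioo (-1) 1) := fun x hx y hy =>
    ⟨hf''' x hx y hy, hf'' x hx y hy⟩
  have hv : IsPrimitiveOn g' g'' (Ioo (-1) 1) := fun x hx y hy =>
    ⟨hg'' x hx y hy, hg' x hx y hy⟩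
  exact ⟨tendsto_one_sub_sq_mul_mul_star_nhdsLT_one hu hv hf'''2 hf''2 hg''2 hg'2,
    tendsto_one_sub_sq_mul_mul_star_nhdsGT_neg_one hu hv hf'''2 hf''2 hg''2 hg'2⟩

/-- For `f, g ∈ V₃`, `(1-x²) f''(x) conj(g'(x)) → 0` as `x → 1⁻` and as `x → -1⁺`. -/
theorem V3_boundary_term_vanishes (k : ℝ) (hk : 0 < k)
    (f f' f'' f''' g g' g'' g''' : ℝ → ℂ)
    (hf : InV3 f f' f'' f''') (hg : InV3 g g' g'' g''') :
    Tendsto (fun x => ((1 - x ^ 2 : ℝ) : ℂ) * f'' x * star (g' x)) (𝓝[<] (1 : ℝ)) (𝓝 0) ∧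
    Tendsto (fun x => ((1 - x ^ 2 : ℝ) : ℂ) * f'' x * star (g' x)) (𝓝[>] (-1 : ℝ)) (𝓝 0) :=
  V3_boundary_term_vanishes_general f f' f'' f''' g g' g'' g''' hf hg
end
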